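/- Let f* ∈ H be a best simultaneous approximation (BSA) to the family {f_a}_{a∈A} from H. Then for some positive integer k with 1 ≤ k ≤ n+1 there exist a₁,…,a_k ∈ A, x₁,…,x_k ∈ X and positive real numbers λ₁,…,λ_k with λ₁+⋯+λ_k = 1 such that: (i) Σ_{i=1}^{k} λᵢ ‖f_{aᵢ}(xᵢ) − f*(xᵢ)‖ ≤ Σ_{i=1}^{k} λᵢ ‖f_{aᵢ}(xᵢ) − f(xᵢ)‖ for all f ∈ H; and (ii) ‖f_{aᵢ}(xᵢ) − f*(xᵢ)‖ = |||f_{aᵢ} − f*||| = max_{a∈A} |||f_a − f*||| for all i with 1 ≤ i ≤ k. -/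

import Mathlib

/-!
Scalarize the problem: if `B` is the closed unit ball of the dual of `Y` with its weak-* topology,
then `max_a |||f_a - f||| = max φ (f_a x - f x)` over the compact space `A × X × B`, a maximum of
continuous functions that depend affinely on `f`. If `f*` is optimal and `r` is the optimal value,
then `0` lies in the convex hull of the functionals `h ↦ φ (h x)` on `H`, where `(a, x, φ)` ranges
over the points with `φ (f_a x - f* x) = r`: otherwise a separating functional yields some `h ∈ H`
along which the maximum strictly decreases. Carathéodory's theorem selects at most `n + 1` such
points `(aᵢ, xᵢ, φᵢ)` with weights `λᵢ`; then `∑ λᵢ φᵢ (f_{aᵢ} xᵢ - f xᵢ) = r` for every `f ∈ H`,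
which gives (i), and `φᵢ (f_{aᵢ} xᵢ - f* xᵢ) = r` forces (ii).
-/

open Set Metric Module

theorem exists_fin_pos_convex_span_of_mem_convexHull {𝕜 E : Type*} [Field 𝕜] [LinearOrder 𝕜]
    [IsStrictOrderedRing 𝕜] [AddCommGroup E] [Module 𝕜 E] [FiniteDimensional 𝕜 E]
    {s : Set E} {x : E} (hx : x ∈ convexHull 𝕜 s) :
    ∃ k ≤ finrank 𝕜 E + 1, ∃ (z : Fin k → E) (w : Fin k → 𝕜), (∀ i, z i ∈ s) ∧
      (∀ i, 0 < w i) ∧ ∑ i, w i = 1 ∧ ∑ i, w i • z i = x := by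
  obtain ⟨ι, _, z, w, hzs, hz, hw₀, hw₁, hwz⟩ := eq_pos_convex_span_of_mem_convexHull hx
  let e := (Fintype.equivFin ι).symm
  refine ⟨Fintype.card ι, hz.card_le_finrank_succ.trans (by gcongr; exact Submodule.finrank_le _),
    z ∘ e, w ∘ e, fun i => hzs (mem_range_self _), fun i => hw₀ _, ?_, ?_⟩
  · rwa [← e.sum_comp w] at hw₁
  · rwa [← e.sum_comp (fun i => w i • z i)] at hwz

theorem IsCompact.convexHull {E : Type*} [AddCommGroup E] [Module ℝ E] [TopologicalSpace E]
    [ContinuousAdd E] [ContinuousSMul ℝ E] [FiniteDimensional ℝ E] {s : Set E}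
    (hs : IsCompact s) : IsCompact (_root_.convexHull ℝ s) := by
  have hunion : _root_.convexHull ℝ s = ⋃ k ∈ Finset.range (finrank ℝ E + 2),
      (fun p : (Fin k → ℝ) × (Fin k → E) => ∑ i, p.1 i • p.2 i) ''
        (stdSimplex ℝ (Fin k) ×ˢ univ.pi fun _ => s) := by
    refine Subset.antisymm (fun x hx => ?_) (iUnion₂_subset fun k _ => ?_)
    · obtain ⟨k, hk, z, w, hzs, hw₀, hw₁, hwz⟩ := exists_fin_pos_convex_span_of_mem_convexHull hx
      exact mem_biUnion (Finset.mem_range.2 (Nat.lt_succ_of_le hk))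
        ⟨(w, z), ⟨⟨fun i => (hw₀ i).le, hw₁⟩, fun i _ => hzs i⟩, hwz⟩
    · rintro _ ⟨⟨w, z⟩, ⟨⟨hw₀, hw₁⟩, hzs⟩, rfl⟩
      exact (convex_convexHull ℝ s).sum_mem (fun i _ => hw₀ i) hw₁
        fun i _ => subset_convexHull ℝ s (hzs i (mem_univ i))
  rw [hunion]
  exact (Finset.range _).finite_toSet.isCompact_biUnion fun k _ =>
    ((isCompact_stdSimplex ℝ (Fin k)).prod (isCompact_univ_pi fun _ => hs)).image (by fun_prop)

theorem exists_pos_forall_add_mul_lt {S : Type*} [TopologicalSpace S] [CompactSpace S]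
    {G h : S → ℝ} (hG : Continuous G) (hh : Continuous h) {m : ℝ} (hGm : ∀ s, G s ≤ m)
    (hneg : ∀ s, G s = m → h s < 0) : ∃ t > 0, ∀ s, G s + t * h s < m := by
  obtain ⟨ε, hε, hψ⟩ := isCompact_univ.exists_forall_le' (f := fun s => max (m - G s) (-h s))
    (by fun_prop) (a := 0) fun s _ => by
      rcases (hGm s).lt_or_eq with hlt | heq
      · exact lt_max_of_lt_left (by linarith)
      · exact lt_max_of_lt_right (by linarith [hneg s heq])
  obtain ⟨C, hC⟩ := isCompact_univ.exists_bound_of_continuousOn hh.continuousOn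
  set t := ε / (|C| + 1)
  have ht : 0 < t := by positivity
  have htC : t * |C| < ε := by
    rw [div_mul_eq_mul_div, div_lt_iff₀ (by positivity)]
    nlinarith [abs_nonneg C]
  refine ⟨t, ht, fun s => ?_⟩
  rcases le_max_iff.1 (hψ s trivial) with hGs | hhs
  · have : h s ≤ |C| := (le_abs_self _).trans ((hC s trivial).trans (le_abs_self C))
    nlinarith [mul_le_mul_of_nonneg_left this ht.le]
  · nlinarith [mul_le_mul_of_nonneg_left hhs ht.le, hGm s]

theorem zero_mem_convexHull_of_forall_exists_le {S E : Type*} [TopologicalSpace S]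
    [CompactSpace S] [AddCommGroup E] [Module ℝ E] [TopologicalSpace E] [IsTopologicalAddGroup E]
    [ContinuousSMul ℝ E] [LocallyConvexSpace ℝ E] [T2Space E] [FiniteDimensional ℝ E]
    {G : S → ℝ} (hG : Continuous G) {Ψ : S → E} (hΨ : Continuous Ψ) {m : ℝ}
    (hGm : ∀ s, G s ≤ m) (hopt : ∀ ℓ : E →L[ℝ] ℝ, ∃ s, m ≤ G s + ℓ (Ψ s)) :
    (0 : E) ∈ convexHull ℝ (Ψ '' {s | G s = m}) := by
  by_contra h0
  have hM : IsCompact (Ψ '' {s | G s = m}) :=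
    (isClosed_eq hG continuous_const).isCompact.image hΨ
  obtain ⟨ℓ, u, hℓ, hu⟩ :=
    geometric_hahn_banach_closed_point (convex_convexHull ℝ _) hM.convexHull.isClosed h0
  rw [map_zero] at hu
  obtain ⟨t, ht, hlt⟩ := exists_pos_forall_add_mul_lt hG (ℓ.continuous.comp hΨ) hGm
    fun s hs => (hℓ _ (subset_convexHull ℝ _ ⟨s, hs, rfl⟩)).trans hu
  obtain ⟨s, hs⟩ := hopt (t • ℓ)
  exact (hlt s).not_ge hs

theorem exists_fin_convex_weights_of_forall_exists_le {S V : Type*} [TopologicalSpace S]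
    [CompactSpace S] [AddCommGroup V] [Module ℝ V] [FiniteDimensional ℝ V]
    {G : S → ℝ} (hG : Continuous G) (L : V →ₗ[ℝ] S → ℝ) (hL : ∀ v, Continuous (L v)) {m : ℝ}
    (hGm : ∀ s, G s ≤ m) (hopt : ∀ v, ∃ s, m ≤ G s + L v s) :
    ∃ k ≤ finrank ℝ V + 1, ∃ (s : Fin k → S) (w : Fin k → ℝ), (∀ i, G (s i) = m) ∧
      (∀ i, 0 < w i) ∧ ∑ i, w i = 1 ∧ ∀ v, ∑ i, w i * L v (s i) = 0 := by
  let b := Module.finBasis ℝ V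
  let Ψ : S → Fin (finrank ℝ V) → ℝ := fun s j => L (b j) s
  have h0 := zero_mem_convexHull_of_forall_exists_le (Ψ := Ψ) hG
    (continuous_pi fun j => hL (b j)) hGm fun ℓ => by
      obtain ⟨s, hs⟩ := hopt (∑ j, ℓ (Pi.single j 1) • b j)
      refine ⟨s, hs.trans_eq ?_⟩
      rw [pi_eq_sum_univ' (Ψ s)]
      simp [Ψ, mul_comm]
  obtain ⟨k, hk, z, w, hz, hw₀, hw₁, hwz⟩ := exists_fin_pos_convex_span_of_mem_convexHull h0
  choose s hsG hsz using hz
  refine ⟨k, by simpa using hk, s, w, hsG, hw₀, hw₁, fun v => ?_⟩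
  have hvanish : ∑ i, w i • (LinearMap.proj (s i)).comp L = 0 := b.ext fun j => by
    simpa [← hsz, Ψ] using congrFun hwz j
  simpa using LinearMap.congr_fun hvanish v

section WeakDualBall

variable {Y : Type*} [NormedAddCommGroup Y] [NormedSpace ℝ Y]

variable (Y) in
def weakDualClosedUnitBall : Set (WeakDual ℝ Y) :=
  WeakDual.toStrongDual ⁻¹' closedBall 0 1

instance : CompactSpace (weakDualClosedUnitBall Y) :=
  isCompact_iff_compactSpace.mp (WeakDual.isCompact_closedBall (0 : StrongDual ℝ Y) 1)

theorem apply_le_norm_of_mem_weakDualClosedUnitBall {φ : WeakDual ℝ Y}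
    (hφ : φ ∈ weakDualClosedUnitBall Y) (y : Y) : φ y ≤ ‖y‖ :=
  (le_abs_self _).trans <| by
    simpa using (WeakDual.toStrongDual φ).le_of_opNorm_le (mem_closedBall_zero_iff.1 hφ) y

/-- Joint continuity fails on all of `WeakDual ℝ Y`; on the unit ball it holds because the
functionals there are uniformly `1`-Lipschitz. -/
theorem Continuous.weakDualClosedUnitBall_apply {P : Type*} [TopologicalSpace P]
    {ψ : P → weakDualClosedUnitBall Y} {w : P → Y} (hψ : Continuous ψ) (hw : Continuous w) :
    Continuous fun p => (ψ p : WeakDual ℝ Y) (w p) :=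
  (continuous_prod_of_continuous_lipschitzWith (fun q : Y × weakDualClosedUnitBall Y => q.2.1 q.1)
    1 (fun y => (WeakDual.eval_continuous y).comp continuous_subtype_val)
    (fun φ => (WeakDual.toStrongDual φ.1).lipschitz.weaken
      (mem_closedBall_zero_iff.1 φ.2))).comp (hw.prodMk hψ)

theorem exists_iSup_norm_le_weakDualClosedUnitBall_apply {A X : Type*} [TopologicalSpace A]
    [CompactSpace A] [Nonempty A] [TopologicalSpace X] [CompactSpace X] [Nonempty X]
    {g : A → C(X, Y)} (hg : Continuous g) :
    ∃ (a : A) (x : X) (φ : weakDualClosedUnitBall Y),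
      ⨆ a, ‖g a‖ ≤ (φ : WeakDual ℝ Y) (g a x) := by
  obtain ⟨a, ha⟩ := (continuous_norm.comp hg).exists_forall_ge (by simp)
  obtain ⟨x, hx⟩ := (g a).continuous.norm.exists_forall_ge (by simp)
  obtain ⟨φ, hφ₁, hφ⟩ := exists_dual_vector'' ℝ (g a x)
  refine ⟨a, x, ⟨StrongDual.toWeakDual φ, mem_closedBall_zero_iff.2 hφ₁⟩, ?_⟩
  calc ⨆ a', ‖g a'‖ ≤ ‖g a‖ := ciSup_le ha
    _ ≤ ‖g a x‖ := ((g a).norm_le (norm_nonneg _)).2 hx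
    _ = _ := hφ.symm

end WeakDualBall

theorem sum_mul_norm_le_sum_mul_norm_sub {ι E : Type*} [Fintype ι] [NormedAddCommGroup E]
    [NormedSpace ℝ E] {w : ι → ℝ} (hw : ∀ i, 0 ≤ w i) {φ : ι → StrongDual ℝ E}
    (hφ : ∀ i y, φ i y ≤ ‖y‖) {u v : ι → E} (hu : ∀ i, φ i (u i) = ‖u i‖)
    (hv : ∑ i, w i * φ i (v i) = 0) : ∑ i, w i * ‖u i‖ ≤ ∑ i, w i * ‖u i - v i‖ :=
  calc ∑ i, w i * ‖u i‖ = ∑ i, w i * φ i (u i - v i) := by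
        simp only [map_sub, mul_sub, Finset.sum_sub_distrib, hv, hu, sub_zero]
    _ ≤ ∑ i, w i * ‖u i - v i‖ :=
        Finset.sum_le_sum fun i _ => mul_le_mul_of_nonneg_left (hφ i _) (hw i)

section BestSimultaneousApproximation

variable {X : Type*} [TopologicalSpace X] [CompactSpace X] {Y : Type*} [NormedAddCommGroup Y]
  {A : Type*} [TopologicalSpace A] [CompactSpace A] {F : A → C(X, Y)}

theorem norm_sub_le_iSup_norm_sub (hF : Continuous F) (f : C(X, Y)) (a : A) :
    ‖F a - f‖ ≤ ⨆ b : A, ‖F b - f‖ :=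
  le_ciSup (isCompact_range (continuous_norm.comp (hF.sub continuous_const))).bddAbove a

theorem exists_extremal_weights_annihilating_of_bsa [NormedSpace ℝ Y] [Nonempty X] [Nonempty A]
    {H : Submodule ℝ C(X, Y)} [FiniteDimensional ℝ H] (hF : Continuous F) {fs : C(X, Y)}
    (hfs : fs ∈ H)
    (hBSA : ∀ f ∈ H, (⨆ a : A, ‖F a - fs‖) ≤ ⨆ a : A, ‖F a - f‖) :
    ∃ k ≤ finrank ℝ H + 1, ∃ (q : Fin k → A × X × weakDualClosedUnitBall Y) (lam : Fin k → ℝ),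
      (∀ i, (q i).2.2.1 (F (q i).1 (q i).2.1 - fs (q i).2.1) = ⨆ a : A, ‖F a - fs‖) ∧
      (∀ i, 0 < lam i) ∧ ∑ i, lam i = 1 ∧
      ∀ h ∈ H, ∑ i, lam i * (q i).2.2.1 (h (q i).2.1) = 0 := by
  set r := ⨆ a : A, ‖F a - fs‖
  let S := A × X × weakDualClosedUnitBall Y
  let G : S → ℝ := fun q => q.2.2.1 (F q.1 q.2.1 - fs q.2.1)
  let L : H →ₗ[ℝ] S → ℝ := LinearMap.pi fun q =>
    (WeakDual.toStrongDual q.2.2.1 ∘L ContinuousMap.evalCLM ℝ q.2.1).toLinearMap ∘ₗ H.subtype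
  have hGr (q : S) : G q ≤ r :=
    (apply_le_norm_of_mem_weakDualClosedUnitBall q.2.2.2 _).trans <|
      ((F q.1 - fs).norm_coe_le_norm q.2.1).trans (norm_sub_le_iSup_norm_sub hF fs q.1)
  obtain ⟨k, hk, q, lam, hGq, hlam₀, hlam₁, hLq⟩ := exists_fin_convex_weights_of_forall_exists_le
    (continuous_snd.snd.weakDualClosedUnitBall_apply (by fun_prop)) L
    (fun h => continuous_snd.snd.weakDualClosedUnitBall_apply
      ((h : C(X, Y)).continuous.comp continuous_snd.fst)) hGr fun h => by
      obtain ⟨a, x, φ, hφ⟩ := exists_iSup_norm_le_weakDualClosedUnitBall_apply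
        (hF.sub (continuous_const (y := fs - h)))
      refine ⟨(a, x, φ), (hBSA _ (H.sub_mem hfs h.2)).trans (hφ.trans_eq ?_)⟩
      simp [L, sub_add]
  exact ⟨k, hk, q, lam, hGq, hlam₀, hlam₁, fun h hh => by simpa [L] using hLq ⟨h, hh⟩⟩

end BestSimultaneousApproximation

theorem bsa_necessity_CXY
    {X : Type*} [TopologicalSpace X] [CompactSpace X]
    {Y : Type*} [NormedAddCommGroup Y] [NormedSpace ℝ Y]
    {A : Type*} [TopologicalSpace A] [CompactSpace A] [Nonempty A]
    {n : ℕ} (hn : 0 < n)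
    (H : Submodule ℝ C(X, Y)) (hH : Module.finrank ℝ H = n)
    (F : A → C(X, Y)) (hF : Continuous F)
    (fs : C(X, Y)) (hfs : fs ∈ H)
    (hBSA : ∀ f ∈ H, (⨆ a : A, ‖F a - fs‖) ≤ ⨆ a : A, ‖F a - f‖) :
    ∃ k : ℕ, 1 ≤ k ∧ k ≤ n + 1 ∧
      ∃ (a : Fin k → A) (x : Fin k → X) (lam : Fin k → ℝ),
        (∀ i, 0 < lam i) ∧ (∑ i, lam i) = 1 ∧
        (∀ f ∈ H, (∑ i, lam i * ‖F (a i) (x i) - fs (x i)‖) ≤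
            ∑ i, lam i * ‖F (a i) (x i) - f (x i)‖) ∧
        (∀ i, ‖F (a i) (x i) - fs (x i)‖ = ‖F (a i) - fs‖ ∧
            ‖F (a i) - fs‖ = ⨆ b : A, ‖F b - fs‖) := by
  have : FiniteDimensional ℝ H := .of_finrank_pos (hH ▸ hn)
  have : Nonempty X := by
    have := Module.nontrivial_of_finrank_pos (R := ℝ) (M := H) (hH ▸ hn)
    obtain ⟨h, hh⟩ := exists_ne (0 : H)
    exact (DFunLike.ne_iff.1 (Subtype.coe_ne_coe.2 hh)).nonempty
  obtain ⟨k, hk, q, lam, hq, hlam₀, hlam₁, hLq⟩ :=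
    exists_extremal_weights_annihilating_of_bsa hF hfs hBSA
  set r := ⨆ a : A, ‖F a - fs‖
  have hr := norm_sub_le_iSup_norm_sub hF fs
  have hnorm (i : Fin k) : ‖F (q i).1 (q i).2.1 - fs (q i).2.1‖ = r ∧ ‖F (q i).1 - fs‖ = r := by
    have h₁ : r ≤ ‖F (q i).1 (q i).2.1 - fs (q i).2.1‖ :=
      (hq i).symm.le.trans (apply_le_norm_of_mem_weakDualClosedUnitBall (q i).2.2.2 _)
    have h₂ : ‖F (q i).1 (q i).2.1 - fs (q i).2.1‖ ≤ ‖F (q i).1 - fs‖ :=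
      (F (q i).1 - fs).norm_coe_le_norm (q i).2.1
    exact ⟨le_antisymm (h₂.trans (hr _)) h₁, le_antisymm (hr _) (h₁.trans h₂)⟩
  refine ⟨k, Nat.one_le_iff_ne_zero.2 (by rintro rfl; simp at hlam₁), hH ▸ hk,
    fun i => (q i).1, fun i => (q i).2.1, lam, hlam₀, hlam₁, fun f hf => ?_,
    fun i => ⟨(hnorm i).1.trans (hnorm i).2.symm, (hnorm i).2⟩⟩
  simpa using sum_mul_norm_le_sum_mul_norm_sub (fun i => (hlam₀ i).le)
    (φ := fun i => WeakDual.toStrongDual (q i).2.2.1)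
    (fun i => apply_le_norm_of_mem_weakDualClosedUnitBall (q i).2.2.2)
    (u := fun i => F (q i).1 (q i).2.1 - fs (q i).2.1) (v := fun i => f (q i).2.1 - fs (q i).2.1)
    (fun i => (hq i).trans (hnorm i).1.symm) (hLq _ (H.sub_mem hf hfs))
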